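/- arXiv:2311.03013 — 3 statements merged into one kernel-verified Lean document; each statement's English description precedes it below -/
import Mathlib

section
/- Let F(z) = Σ_{n=0}^∞ c_n z^n be analytic on the open unit disc 𝔻 with real coefficients c_n, and set U(z) = Re F(z). Assume U has L¹_loc-boundary behavior on ∂𝔻∖{1}, and assume there exist θ₀ ∈ (0,π) and c ≥ 0 such that U(re^{iθ}) ≥ −c for all θ ∈ (−θ₀,θ₀) and all r ∈ [0,1). Then the sequence (c_n) converges, and its limit equals lim_{r→1⁻} (1−r) U(r). -/
open MeasureTheory Filter Set

/-- `U` (defined on the open unit disc) has `L¹_loc`-boundary behavior on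
`∂𝔻 ∖ {1}` (boundary points parametrized as `e^{iθ}`, `θ ∈ [-π,π] ∖ {0}`). -/
def L1locBoundaryBehaviorDisc (U : ℂ → ℝ) : Prop :=
  ∃ f : ℝ → ℝ, ∀ a b : ℝ, -Real.pi ≤ a → a ≤ b → b ≤ Real.pi → (0 : ℝ) ∉ Icc a b →
    IntegrableOn f (Icc a b) ∧
    Tendsto (fun r : ℝ => ∫ θ in a..b, |U (r * Complex.exp (θ * Complex.I)) - f θ|)
      (nhdsWithin 1 (Iio 1)) (nhds 0)

/-!
Write `V r θ = U (r e^{iθ}) = ∑ cₙ rⁿ cos nθ`. By orthogonality `∫ V r = 2π c₀` and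
`∫ V r θ cos Nθ = π c_N r^N` for `N ≥ 1`. On `(-θ₀, θ₀)` the lower bound gives
`|V r| ≤ V r + 2|cst|`, and the mass of `V r` there is the fixed total `2π c₀` minus the outer
parts, which converge by the `L¹` hypothesis; so `∫_{-θ₀}^{θ₀} |V r|` stays bounded as `r → 1`.
Consequently the boundary function `f` is integrable on `[-π, π]` and `∫ V r w → ∫ f w` for every
continuous `w` with `w 0 = 0`. Taking `w θ = 1 - cos Nθ` gives
`π c_N = 2π c₀ - ∫ f + ∫ f(θ) cos Nθ dθ`, so `c_N` converges by the Riemann–Lebesgue lemma, and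
Abel's theorem identifies the limit with that of `(1 - r) U r = (1 - r) ∑ cₙ rⁿ`.
-/

open Topology Real

theorem integral_cos_int_mul (k : ℤ) :
    ∫ x in (-π)..π, cos (k * x) = if k = 0 then 2 * π else 0 := by
  split_ifs with hk
  · simp only [hk, Int.cast_zero, zero_mul, cos_zero, intervalIntegral.integral_const,
      sub_neg_eq_add, smul_eq_mul, mul_one]
    ring
  · have hk' : (k : ℝ) ≠ 0 := by exact_mod_cast hk
    rw [intervalIntegral.integral_comp_mul_left (fun x => cos x) hk', integral_cos, mul_neg,
      sin_neg, sin_int_mul_pi]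
    simp

theorem integral_cos_nat_mul_mul_cos_nat_mul (m n : ℕ) :
    ∫ x in (-π)..π, cos (m * x) * cos (n * x) =
      if m = n then (if n = 0 then 2 * π else π) else 0 := by
  have hprod : ∀ x : ℝ, cos (m * x) * cos (n * x) =
      (cos (((m - n : ℤ) : ℝ) * x) + cos (((m + n : ℤ) : ℝ) * x)) / 2 := fun x => by
    push_cast
    rw [sub_mul, add_mul, ← two_mul_cos_mul_cos]
    ring
  have hint : ∀ k : ℤ, IntervalIntegrable (fun x : ℝ => cos (k * x)) volume (-π) π :=
    fun k => (by fun_prop : Continuous fun x : ℝ => cos (k * x)).intervalIntegrable _ _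
  simp_rw [hprod]
  rw [intervalIntegral.integral_div, intervalIntegral.integral_add (hint _) (hint _),
    integral_cos_int_mul, integral_cos_int_mul]
  split_ifs <;> first | omega | ring

theorem continuous_tsum_mul_cos {a : ℕ → ℝ} (ha : Summable fun n => |a n|) :
    Continuous fun θ : ℝ => ∑' n, a n * cos (n * θ) :=
  continuous_tsum (fun n => by fun_prop) ha fun n θ => by
    rw [norm_mul, Real.norm_eq_abs, Real.norm_eq_abs]
    exact mul_le_of_le_one_right (abs_nonneg _) (abs_cos_le_one _)

theorem integral_tsum_mul_cos_mul_cos {a : ℕ → ℝ} (ha : Summable fun n => |a n|) (N : ℕ) :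
    ∫ θ in (-π)..π, (∑' n, a n * cos (n * θ)) * cos (N * θ) =
      (if N = 0 then 2 * π else π) * a N := by
  have hsum : HasSum (fun n => ∫ θ in (-π)..π, a n * cos (n * θ) * cos (N * θ))
      (∫ θ in (-π)..π, (∑' n, a n * cos (n * θ)) * cos (N * θ)) := by
    refine intervalIntegral.hasSum_integral_of_dominated_convergence (fun n _ => |a n|)
      (fun n => (by fun_prop : Continuous _).aestronglyMeasurable)
      (fun n => .of_forall fun θ _ => ?_) (.of_forall fun _ _ => ha)
      intervalIntegrable_const (.of_forall fun θ _ => ?_)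
    · rw [norm_mul, norm_mul, Real.norm_eq_abs, Real.norm_eq_abs, Real.norm_eq_abs]
      calc |a n| * |cos (n * θ)| * |cos (N * θ)| ≤ |a n| * 1 * 1 := by
            gcongr <;> exact abs_cos_le_one _
        _ = |a n| := by ring
    · have hs : Summable fun n => a n * cos (n * θ) := .of_norm_bounded ha fun n => by
        rw [norm_mul, Real.norm_eq_abs, Real.norm_eq_abs]
        exact mul_le_of_le_one_right (abs_nonneg _) (abs_cos_le_one _)
      exact hs.hasSum.mul_right (cos (N * θ))
  have hterm : ∀ n, ∫ θ in (-π)..π, a n * cos (n * θ) * cos (N * θ) =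
      if n = N then (if N = 0 then 2 * π else π) * a N else 0 := fun n => by
    simp_rw [mul_assoc]
    rw [intervalIntegral.integral_const_mul, integral_cos_nat_mul_mul_cos_nat_mul]
    split_ifs with h <;> simp [h, mul_comm]
  simp_rw [hterm] at hsum
  exact hsum.unique (hasSum_ite_eq N _)

theorem hasSum_mul_pow_mul_cos {c : ℕ → ℝ} {r θ : ℝ} {s : ℂ}
    (h : HasSum (fun n => (c n : ℂ) * (r * Complex.exp (θ * Complex.I)) ^ n) s) :
    HasSum (fun n => c n * r ^ n * cos (n * θ)) s.re := by
  convert Complex.hasSum_re h using 2 with n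
  rw [mul_pow, ← Complex.exp_nat_mul, ← mul_assoc, ← Complex.ofReal_pow, ← Complex.ofReal_mul,
    Complex.re_ofReal_mul, ← mul_assoc, ← Complex.ofReal_natCast, ← Complex.ofReal_mul,
    Complex.exp_ofReal_mul_I_re]

theorem summable_norm_mul_pow_of_summable {𝕜 : Type*} [NormedDivisionRing 𝕜] {a : ℕ → 𝕜}
    {z w : 𝕜} (hz : Summable fun n => a n * z ^ n) (hw : ‖w‖ < ‖z‖) :
    Summable fun n => ‖a n * w ^ n‖ := by
  have hz0 : 0 < ‖z‖ := (norm_nonneg w).trans_lt hw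
  obtain ⟨C, hC⟩ := hz.tendsto_atTop_zero.norm.bddAbove_range
  refine .of_nonneg_of_le (fun _ => norm_nonneg _) (fun n => ?_)
    ((summable_geometric_of_lt_one (by positivity) ((div_lt_one hz0).2 hw)).mul_left C)
  calc ‖a n * w ^ n‖ = ‖a n * z ^ n‖ * (‖w‖ / ‖z‖) ^ n := by
        rw [norm_mul, norm_mul, norm_pow, norm_pow, div_pow]
        field_simp
    _ ≤ C * (‖w‖ / ‖z‖) ^ n := by gcongr; exact hC ⟨n, rfl⟩

theorem tendsto_one_sub_mul_tsum_mul_pow {c : ℕ → ℝ} {a : ℝ} (hc : Tendsto c atTop (𝓝 a)) :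
    Tendsto (fun r => (1 - r) * ∑' n, c n * r ^ n) (𝓝[<] 1) (𝓝 a) := by
  -- Abel's theorem applies to the differences `c (n + 1) - c n`, whose series sums to `a - c 0`.
  have hdiff : Tendsto (fun r => ∑' n, (c (n + 1) - c n) * r ^ n) (𝓝[<] 1) (𝓝 (a - c 0)) :=
    Real.tendsto_tsum_powerSeries_nhdsWithin_lt <| by
      simp only [Finset.sum_range_sub]
      exact hc.sub_const _
  have hid : ∀ r ∈ Ioo (0 : ℝ) 1,
      c 0 + r * ∑' n, (c (n + 1) - c n) * r ^ n = (1 - r) * ∑' n, c n * r ^ n := by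
    intro r hr
    have hS : HasSum (fun n => c n * r ^ n) (∑' n, c n * r ^ n) := by
      refine (summable_of_isBigO_nat (summable_geometric_of_lt_one hr.1.le hr.2) ?_).hasSum
      simpa using (hc.isBigO_one ℝ).mul (Asymptotics.isBigO_refl (fun n => r ^ n) atTop)
    have hshift := (hasSum_nat_add_iff' 1).2 hS
    simp only [Finset.range_one, Finset.sum_singleton, pow_zero, mul_one] at hshift
    rw [← tsum_mul_left, tsum_congr fun n => show r * ((c (n + 1) - c n) * r ^ n) =
      c (n + 1) * r ^ (n + 1) - r * (c n * r ^ n) by ring, (hshift.sub (hS.mul_left r)).tsum_eq]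
    ring
  have hlim := tendsto_const_nhds (x := c 0) |>.add
    ((tendsto_id.mono_left nhdsWithin_le_nhds).mul hdiff)
  rw [one_mul, add_sub_cancel] at hlim
  exact hlim.congr' (eventually_of_mem (Ioo_mem_nhdsLT zero_lt_one) hid)

theorem tendsto_integral_mul_cos_cocompact {f : ℝ → ℝ} (hf : Integrable f) :
    Tendsto (fun t => ∫ x, f x * cos (t * x)) (cocompact ℝ) (𝓝 0) := by
  have hscale : Tendsto (fun t : ℝ => t * (2 * π)⁻¹) (cocompact ℝ) (cocompact ℝ) :=
    (Homeomorph.mulRight₀ _ (by positivity)).isClosedEmbedding.tendsto_cocompact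
  have h := (Complex.continuous_re.tendsto 0).comp
    ((Real.tendsto_integral_exp_smul_cocompact fun x => (f x : ℂ)).comp hscale)
  rw [Complex.zero_re] at h
  refine h.congr fun t => ?_
  have hint : Integrable fun v : ℝ => Real.fourierChar (-(v * (t * (2 * π)⁻¹))) • (f v : ℂ) := by
    simpa [mul_comm] using (Real.fourierIntegral_convergent_iff (V := ℝ) (μ := volume)
      (f := fun x => (f x : ℂ)) (t * (2 * π)⁻¹)).2 hf.ofReal
  simp only [Function.comp_apply]
  rw [← Complex.reCLM_apply, ← Complex.reCLM.integral_comp_comm hint]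
  congr 1 with x
  have harg : 2 * π * -(x * (t * (2 * π)⁻¹)) = -(t * x) := by field_simp
  rw [Circle.smul_def, fourierChar_apply, harg, smul_eq_mul, Complex.reCLM_apply,
    Complex.re_mul_ofReal, Complex.exp_ofReal_mul_I_re, cos_neg, mul_comm]

theorem tendsto_integral_mul_cos_nat {f : ℝ → ℝ} (hf : IntervalIntegrable f volume (-π) π) :
    Tendsto (fun N : ℕ => ∫ θ in (-π)..π, f θ * cos (N * θ)) atTop (𝓝 0) := by
  have hπ : -π ≤ π := by linarith [pi_pos]
  refine ((tendsto_integral_mul_cos_cocompact (((intervalIntegrable_iff_integrableOn_Ioc_of_le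
    hπ).1 hf).integrable_indicator measurableSet_Ioc)).comp
    (tendsto_natCast_atTop_atTop.mono_right atTop_le_cocompact)).congr fun N => ?_
  rw [intervalIntegral.integral_of_le hπ, ← integral_indicator measurableSet_Ioc]
  simp only [Function.comp_apply, indicator_mul_left]

theorem IntervalIntegrable.mono_Icc {g : ℝ → ℝ} {a b s t : ℝ}
    (hg : IntervalIntegrable g volume a b) (hab : a ≤ b) (hs : s ∈ Icc a b) (ht : t ∈ Icc a b) :
    IntervalIntegrable g volume s t :=
  hg.mono_set (uIcc_subset_uIcc (by rwa [uIcc_of_le hab]) (by rwa [uIcc_of_le hab]))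

theorem abs_integral_mul_le {g w : ℝ → ℝ} {a b η : ℝ} (hab : a ≤ b)
    (hg : IntervalIntegrable g volume a b) (hw : ∀ x ∈ Icc a b, |w x| ≤ η) :
    |∫ x in a..b, g x * w x| ≤ η * ∫ x in a..b, |g x| := by
  rw [← intervalIntegral.integral_const_mul]
  refine intervalIntegral.norm_integral_le_of_norm_le (f := fun x => g x * w x) hab
    (.of_forall fun x hx => ?_) (hg.abs.const_mul η)
  rw [Real.norm_eq_abs, abs_mul, mul_comm]
  exact mul_le_mul_of_nonneg_right (hw x (Ioc_subset_Icc_self hx)) (abs_nonneg _)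

theorem abs_integral_sub_mul_le {u v w : ℝ → ℝ} {ρ δ R η : ℝ} (hρ : 0 ≤ ρ) (hρδ : ρ ≤ δ)
    (hδR : δ ≤ R) (hu : IntervalIntegrable u volume (-δ) δ)
    (hv : IntervalIntegrable v volume (-R) R) (hw : ∀ x ∈ Icc (-ρ) ρ, |w x| ≤ η) :
    |∫ x in (-ρ)..ρ, (u x - v x) * w x| ≤
      η * ((∫ x in (-δ)..δ, |u x|) + ∫ x in (-R)..R, |v x|) := by
  have hu' := hu.mono_Icc (s := -ρ) (t := ρ) (by linarith) ⟨by linarith, by linarith⟩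
    ⟨by linarith, by linarith⟩
  have hv' := hv.mono_Icc (s := -ρ) (t := ρ) (by linarith) ⟨by linarith, by linarith⟩
    ⟨by linarith, by linarith⟩
  have hη : 0 ≤ η := (abs_nonneg _).trans (hw 0 ⟨by linarith, hρ⟩)
  refine (abs_integral_mul_le (by linarith) (hu'.sub hv') hw).trans
    (mul_le_mul_of_nonneg_left ?_ hη)
  calc ∫ x in (-ρ)..ρ, |u x - v x| ≤ ∫ x in (-ρ)..ρ, (|u x| + |v x|) :=
        intervalIntegral.integral_mono_on (by linarith) (hu'.sub hv').abs (hu'.abs.add hv'.abs)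
          fun x _ => abs_sub _ _
    _ = (∫ x in (-ρ)..ρ, |u x|) + ∫ x in (-ρ)..ρ, |v x| :=
        intervalIntegral.integral_add hu'.abs hv'.abs
    _ ≤ (∫ x in (-δ)..δ, |u x|) + ∫ x in (-R)..R, |v x| := by
        gcongr
        · exact intervalIntegral.integral_mono_interval (by linarith) (by linarith) hρδ
            (.of_forall fun _ => abs_nonneg _) hu.abs
        · exact intervalIntegral.integral_mono_interval (by linarith) (by linarith) (by linarith)
            (.of_forall fun _ => abs_nonneg _) hv.abs

theorem eventually_forall_abs_le_of_continuousAt {w : ℝ → ℝ} (hw : ContinuousAt w 0)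
    (hw0 : w 0 = 0) {η : ℝ} (hη : 0 < η) : ∀ᶠ ρ in 𝓝[>] 0, ∀ θ ∈ Icc (-ρ) ρ, |w θ| ≤ η := by
  obtain ⟨ρ₀, hρ₀, hball⟩ := Metric.continuousAt_iff.1 hw η hη
  filter_upwards [Ioo_mem_nhdsGT hρ₀] with ρ hρ θ hθ
  have hwθ := hball (x := θ) (by rw [Real.dist_0_eq_abs]; exact (abs_le.2 hθ).trans_lt hρ.2)
  rw [Real.dist_eq, hw0, sub_zero] at hwθ
  exact hwθ.le

theorem integrableOn_Ioc_of_integral_norm_le_left {f : ℝ → ℝ} {a b K : ℝ} (hab : a < b)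
    (h : ∀ s ∈ Ioo a b, IntegrableOn f (Ioc s b) ∧ ∫ x in Ioc s b, ‖f x‖ ≤ K) :
    IntegrableOn f (Ioc a b) := by
  obtain ⟨u, -, hu, hlim⟩ := exists_seq_strictAnti_tendsto' hab
  exact integrableOn_Ioc_of_intervalIntegral_norm_bounded_left (fun n => (h _ (hu n)).1) hlim
    (.of_forall fun n => (h _ (hu n)).2)

theorem integrableOn_Ioc_of_integral_norm_le_right {f : ℝ → ℝ} {a b K : ℝ} (hab : a < b)
    (h : ∀ t ∈ Ioo a b, IntegrableOn f (Ioc a t) ∧ ∫ x in Ioc a t, ‖f x‖ ≤ K) :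
    IntegrableOn f (Ioc a b) := by
  obtain ⟨u, -, hu, hlim⟩ := exists_seq_strictMono_tendsto' hab
  exact integrableOn_Ioc_of_intervalIntegral_norm_bounded_right (fun n => (h _ (hu n)).1) hlim
    (.of_forall fun n => (h _ (hu n)).2)

/-- The hypothesis `L1locBoundaryBehaviorDisc U`, with witness `f`, is this property for
`l = 𝓝[<] 1` and `V r θ = U (r e^{iθ})`. -/
def TendstoL1locAwayFromZero {ι : Type*} (l : Filter ι) (V : ι → ℝ → ℝ) (f : ℝ → ℝ) : Prop :=
  ∀ a b : ℝ, -π ≤ a → a ≤ b → b ≤ π → (0 : ℝ) ∉ Icc a b →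
    IntegrableOn f (Icc a b) ∧ Tendsto (fun i => ∫ θ in a..b, |V i θ - f θ|) l (𝓝 0)

namespace TendstoL1locAwayFromZero

variable {ι : Type*} {l : Filter ι} {V : ι → ℝ → ℝ} {f : ℝ → ℝ} {a b : ℝ}

theorem intervalIntegrable (h : TendstoL1locAwayFromZero l V f) (ha : -π ≤ a) (hab : a ≤ b)
    (hb : b ≤ π) (h0 : (0 : ℝ) ∉ Icc a b) : IntervalIntegrable f volume a b :=
  (intervalIntegrable_iff_integrableOn_Ioc_of_le hab).2
    ((h a b ha hab hb h0).1.mono_set Ioc_subset_Icc_self)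

theorem tendsto_integral_sub_mul (h : TendstoL1locAwayFromZero l V f)
    (hV : ∀ᶠ i in l, IntervalIntegrable (V i) volume (-π) π) (ha : -π ≤ a) (hab : a ≤ b)
    (hb : b ≤ π) (h0 : (0 : ℝ) ∉ Icc a b) {w : ℝ → ℝ} (hw : ContinuousOn w (Icc a b)) :
    Tendsto (fun i => ∫ θ in a..b, (V i θ - f θ) * w θ) l (𝓝 0) := by
  obtain ⟨M, hM⟩ := isCompact_Icc.exists_bound_of_continuousOn hw
  refine squeeze_zero_norm' ?_ (by simpa using (h a b ha hab hb h0).2.const_mul M)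
  filter_upwards [hV] with i hVi
  have hVi' := hVi.mono_Icc (by linarith [pi_pos]) ⟨ha, by linarith⟩ ⟨by linarith, hb⟩
  exact abs_integral_mul_le hab (hVi'.sub (h.intervalIntegrable ha hab hb h0)) hM

theorem tendsto_integral (h : TendstoL1locAwayFromZero l V f)
    (hV : ∀ᶠ i in l, IntervalIntegrable (V i) volume (-π) π) (ha : -π ≤ a) (hab : a ≤ b)
    (hb : b ≤ π) (h0 : (0 : ℝ) ∉ Icc a b) :
    Tendsto (fun i => ∫ θ in a..b, V i θ) l (𝓝 (∫ θ in a..b, f θ)) := by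
  have hlim := (h.tendsto_integral_sub_mul hV ha hab hb h0 (w := fun _ => 1)
    continuousOn_const).add_const (∫ θ in a..b, f θ)
  simp only [mul_one, zero_add] at hlim
  refine hlim.congr' ?_
  filter_upwards [hV] with i hVi
  rw [intervalIntegral.integral_sub
    (hVi.mono_Icc (by linarith [pi_pos]) ⟨ha, by linarith⟩ ⟨by linarith, hb⟩)
    (h.intervalIntegrable ha hab hb h0), sub_add_cancel]

theorem eventually_integral_abs_le (h : TendstoL1locAwayFromZero l V f)
    (hV : ∀ᶠ i in l, IntervalIntegrable (V i) volume (-π) π) {δ C m : ℝ} (hδ : δ ∈ Ioo 0 π)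
    (hlow : ∀ᶠ i in l, ∀ θ ∈ Ioo (-δ) δ, -C ≤ V i θ)
    (hmass : ∀ᶠ i in l, ∫ θ in (-π)..π, V i θ ≤ m) :
    ∃ K, ∀ᶠ i in l, ∫ θ in (-δ)..δ, |V i θ| ≤ K := by
  obtain ⟨hδ0, hδπ⟩ := hδ
  have hl := h.tendsto_integral hV (b := -δ) le_rfl (by linarith) (by linarith)
    fun h0 => by linarith [h0.2]
  have hr := h.tendsto_integral hV (by linarith) hδπ.le le_rfl fun h0 => by linarith [h0.1]
  refine ⟨m - (∫ θ in (-π)..(-δ), f θ) - (∫ θ in δ..π, f θ) + 2 + 2 * δ * (2 * |C|), ?_⟩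
  filter_upwards [hV, hlow, hmass, hl.eventually_const_lt (sub_one_lt _),
    hr.eventually_const_lt (sub_one_lt _)] with i hVi hlowi hmassi hli hri
  have h₁ : IntervalIntegrable (V i) volume (-π) (-δ) :=
    hVi.mono_Icc (by linarith) ⟨le_rfl, by linarith⟩ ⟨by linarith, by linarith⟩
  have h₂ : IntervalIntegrable (V i) volume (-δ) δ :=
    hVi.mono_Icc (by linarith) ⟨by linarith, by linarith⟩ ⟨by linarith, by linarith⟩
  have h₃ : IntervalIntegrable (V i) volume δ π :=
    hVi.mono_Icc (by linarith) ⟨by linarith, by linarith⟩ ⟨by linarith, le_rfl⟩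
  have habs : ∫ θ in (-δ)..δ, |V i θ| ≤ (∫ θ in (-δ)..δ, V i θ) + 2 * δ * (2 * |C|) :=
    calc ∫ θ in (-δ)..δ, |V i θ| ≤ ∫ θ in (-δ)..δ, (V i θ + 2 * |C|) :=
          intervalIntegral.integral_mono_on_of_le_Ioo (by linarith) h₂.abs
            (h₂.add intervalIntegrable_const) fun θ hθ => abs_le.2
              ⟨by linarith [hlowi θ hθ, le_abs_self C], by linarith [abs_nonneg C]⟩
      _ = (∫ θ in (-δ)..δ, V i θ) + 2 * δ * (2 * |C|) := by
          rw [intervalIntegral.integral_add h₂ intervalIntegrable_const,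
            intervalIntegral.integral_const, smul_eq_mul]
          ring
  have hsplit : (∫ θ in (-π)..(-δ), V i θ) + (∫ θ in (-δ)..δ, V i θ) + ∫ θ in δ..π, V i θ =
      ∫ θ in (-π)..π, V i θ := by
    rw [intervalIntegral.integral_add_adjacent_intervals h₁ h₂,
      intervalIntegral.integral_add_adjacent_intervals (h₁.trans h₂) h₃]
  linarith

theorem integral_norm_le_add_one [l.NeBot] (h : TendstoL1locAwayFromZero l V f)
    (hV : ∀ᶠ i in l, IntervalIntegrable (V i) volume (-π) π) {δ K : ℝ} (hδπ : δ ≤ π)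
    (hK : ∀ᶠ i in l, ∫ θ in (-δ)..δ, |V i θ| ≤ K) (ha : -δ ≤ a) (hab : a ≤ b) (hb : b ≤ δ)
    (h0 : (0 : ℝ) ∉ Icc a b) : ∫ θ in Ioc a b, ‖f θ‖ ≤ K + 1 := by
  obtain ⟨i, hVi, hKi, hconv⟩ :=
    (hV.and (hK.and ((h a b (by linarith) hab (by linarith) h0).2.eventually_lt_const
      one_pos))).exists
  have hVab : IntervalIntegrable (V i) volume a b :=
    hVi.mono_Icc (by linarith) ⟨by linarith, by linarith⟩ ⟨by linarith, by linarith⟩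
  have hfab := h.intervalIntegrable (by linarith) hab (by linarith) h0
  rw [← intervalIntegral.integral_of_le hab]
  calc ∫ θ in a..b, ‖f θ‖ ≤ ∫ θ in a..b, (|V i θ - f θ| + |V i θ|) :=
        intervalIntegral.integral_mono_on hab hfab.norm ((hVab.sub hfab).abs.add hVab.abs)
          fun θ _ => by
            rw [Real.norm_eq_abs, abs_sub_comm]
            linarith [abs_sub_abs_le_abs_sub (f θ) (V i θ)]
    _ = (∫ θ in a..b, |V i θ - f θ|) + ∫ θ in a..b, |V i θ| :=
        intervalIntegral.integral_add (hVab.sub hfab).abs hVab.abs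
    _ ≤ 1 + K := by
        refine add_le_add hconv.le (le_trans ?_ hKi)
        exact intervalIntegral.integral_mono_interval ha hab hb (.of_forall fun _ => abs_nonneg _)
          (hVi.mono_Icc (by linarith) ⟨by linarith, by linarith⟩ ⟨by linarith, by linarith⟩).abs
    _ = K + 1 := add_comm _ _

theorem intervalIntegrable_of_eventually_integral_abs_le [l.NeBot]
    (h : TendstoL1locAwayFromZero l V f) (hV : ∀ᶠ i in l, IntervalIntegrable (V i) volume (-π) π)
    {δ K : ℝ} (hδ : δ ∈ Ioo 0 π) (hK : ∀ᶠ i in l, ∫ θ in (-δ)..δ, |V i θ| ≤ K) :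
    IntervalIntegrable f volume (-π) π := by
  obtain ⟨hδ0, hδπ⟩ := hδ
  have hleft : IntervalIntegrable f volume (-δ) 0 :=
    (intervalIntegrable_iff_integrableOn_Ioc_of_le (by linarith)).2 <|
      integrableOn_Ioc_of_integral_norm_le_right (by linarith) fun t ht =>
        ⟨(h (-δ) t (by linarith) ht.1.le (by linarith [ht.2]) fun h0 => by
            linarith [h0.2, ht.2]).1.mono_set Ioc_subset_Icc_self,
          h.integral_norm_le_add_one hV hδπ.le hK le_rfl ht.1.le (by linarith [ht.2])
            fun h0 => by linarith [h0.2, ht.2]⟩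
  have hright : IntervalIntegrable f volume 0 δ :=
    (intervalIntegrable_iff_integrableOn_Ioc_of_le hδ0.le).2 <|
      integrableOn_Ioc_of_integral_norm_le_left hδ0 fun s hs =>
        ⟨(h s δ (by linarith [hs.1]) hs.2.le hδπ.le fun h0 => by
            linarith [h0.1, hs.1]).1.mono_set Ioc_subset_Icc_self,
          h.integral_norm_le_add_one hV hδπ.le hK (by linarith [hs.1]) hs.2.le le_rfl
            fun h0 => by linarith [h0.1, hs.1]⟩
  exact (((h.intervalIntegrable le_rfl (by linarith) (by linarith) fun h0 => by
    linarith [h0.2]).trans hleft).trans hright).trans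
    (h.intervalIntegrable (by linarith) hδπ.le le_rfl fun h0 => by linarith [h0.1])

theorem tendsto_integral_sub_mul_of_map_zero (h : TendstoL1locAwayFromZero l V f)
    (hV : ∀ᶠ i in l, IntervalIntegrable (V i) volume (-π) π)
    (hf : IntervalIntegrable f volume (-π) π) {δ K : ℝ} (hδ : δ ∈ Ioo 0 π)
    (hK : ∀ᶠ i in l, ∫ θ in (-δ)..δ, |V i θ| ≤ K) {w : ℝ → ℝ} (hw : Continuous w)
    (hw0 : w 0 = 0) :
    Tendsto (fun i => ∫ θ in (-π)..π, (V i θ - f θ) * w θ) l (𝓝 0) := by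
  obtain ⟨hδ0, hδπ⟩ := hδ
  set M := |K| + (∫ θ in (-π)..π, |f θ|) + 1
  have hM : 0 < M := by
    have : 0 ≤ ∫ θ in (-π)..π, |f θ| :=
      intervalIntegral.integral_nonneg (by linarith) fun θ _ => abs_nonneg (f θ)
    positivity
  refine Metric.tendsto_nhds.2 fun ε hε => ?_
  -- On `[-ρ, ρ]` the weight is small and `∫ |V i|` is bounded; outside, `V i → f` in `L¹`.
  obtain ⟨ρ, hwρ, hρ0, hρδ⟩ := ((eventually_forall_abs_le_of_continuousAt hw.continuousAt hw0
    (show 0 < ε / (2 * M) by positivity)).and (Ioo_mem_nhdsGT hδ0)).exists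
  have hout := (h.tendsto_integral_sub_mul hV (a := -π) (b := -ρ) le_rfl (by linarith)
    (by linarith) (fun h0 => by linarith [h0.2]) hw.continuousOn).add
    (h.tendsto_integral_sub_mul hV (a := ρ) (b := π) (by linarith) (by linarith) le_rfl
    (fun h0 => by linarith [h0.1]) hw.continuousOn)
  rw [zero_add] at hout
  filter_upwards [hV, hK, Metric.tendsto_nhds.1 hout (ε / 2) (by positivity)] with i hVi hKi hi
  have hg : IntervalIntegrable (fun θ => (V i θ - f θ) * w θ) volume (-π) π :=
    (hVi.sub hf).mul_continuousOn hw.continuousOn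
  have h₁ := hg.mono_Icc (t := -ρ) (by linarith) ⟨le_rfl, by linarith⟩ ⟨by linarith, by linarith⟩
  have h₂ := hg.mono_Icc (s := -ρ) (t := ρ) (by linarith) ⟨by linarith, by linarith⟩
    ⟨by linarith, by linarith⟩
  have h₃ := hg.mono_Icc (s := ρ) (by linarith) ⟨by linarith, by linarith⟩ ⟨by linarith, le_rfl⟩
  have hsplit₁ := intervalIntegral.integral_add_adjacent_intervals h₁ h₂
  have hsplit₂ := intervalIntegral.integral_add_adjacent_intervals (h₁.trans h₂) h₃
  have hinner : |∫ θ in (-ρ)..ρ, (V i θ - f θ) * w θ| ≤ ε / (2 * M) * M := by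
    refine (abs_integral_sub_mul_le hρ0.le hρδ.le hδπ.le
      (hVi.mono_Icc (s := -δ) (t := δ) (by linarith) ⟨by linarith, by linarith⟩
        ⟨by linarith, by linarith⟩) hf hwρ).trans (mul_le_mul_of_nonneg_left ?_ (by positivity))
    linarith [le_abs_self K]
  rw [Real.dist_eq, sub_zero] at hi ⊢
  calc |∫ θ in (-π)..π, (V i θ - f θ) * w θ|
      ≤ |(∫ θ in (-π)..(-ρ), (V i θ - f θ) * w θ) + ∫ θ in ρ..π, (V i θ - f θ) * w θ| +
        |∫ θ in (-ρ)..ρ, (V i θ - f θ) * w θ| := by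
        rw [← hsplit₂, ← hsplit₁]
        exact (abs_add_le _ _).trans_eq' (by ring_nf)
    _ < ε / 2 + ε / (2 * M) * M := add_lt_add_of_lt_of_le hi hinner
    _ = ε := by field_simp; ring

theorem tendsto_integral_mul (h : TendstoL1locAwayFromZero l V f)
    (hV : ∀ᶠ i in l, IntervalIntegrable (V i) volume (-π) π)
    (hf : IntervalIntegrable f volume (-π) π) {δ K : ℝ} (hδ : δ ∈ Ioo 0 π)
    (hK : ∀ᶠ i in l, ∫ θ in (-δ)..δ, |V i θ| ≤ K) {w : ℝ → ℝ} (hw : Continuous w)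
    (hw0 : w 0 = 0) :
    Tendsto (fun i => ∫ θ in (-π)..π, V i θ * w θ) l (𝓝 (∫ θ in (-π)..π, f θ * w θ)) := by
  have hlim := (h.tendsto_integral_sub_mul_of_map_zero hV hf hδ hK hw hw0).add_const
    (∫ θ in (-π)..π, f θ * w θ)
  rw [zero_add] at hlim
  refine hlim.congr' ?_
  filter_upwards [hV] with i hVi
  rw [← intervalIntegral.integral_add ((hVi.sub hf).mul_continuousOn hw.continuousOn)
    (hf.mul_continuousOn hw.continuousOn)]
  simp only [sub_mul, sub_add_cancel]

end TendstoL1locAwayFromZero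

theorem TendstoL1locAwayFromZero.pi_mul_coeff_eq {c : ℕ → ℝ} {V : ℝ → ℝ → ℝ} {f : ℝ → ℝ}
    {δ K : ℝ} (hL1 : TendstoL1locAwayFromZero (𝓝[<] 1) V f)
    (hV : ∀ r ∈ Ico (0 : ℝ) 1, IntervalIntegrable (V r) volume (-π) π)
    (hcoeff : ∀ r ∈ Ico (0 : ℝ) 1, ∀ N : ℕ,
      ∫ θ in (-π)..π, V r θ * cos (N * θ) = (if N = 0 then 2 * π else π) * (c N * r ^ N))
    (hf : IntervalIntegrable f volume (-π) π) (hδ : δ ∈ Ioo 0 π)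
    (hK : ∀ᶠ r in 𝓝[<] 1, ∫ θ in (-δ)..δ, |V r θ| ≤ K) {N : ℕ} (hN : N ≠ 0) :
    π * c N = 2 * π * c 0 - ∫ θ in (-π)..π, f θ * (1 - cos (N * θ)) := by
  have hr : Ico (0 : ℝ) 1 ∈ 𝓝[<] 1 := Ico_mem_nhdsLT one_pos
  have hval : ∀ r ∈ Ico (0 : ℝ) 1,
      ∫ θ in (-π)..π, V r θ * (1 - cos (N * θ)) = 2 * π * c 0 - π * (c N * r ^ N) :=
    fun r hr' => by
      have hmass := hcoeff r hr' 0
      simp only [Nat.cast_zero, zero_mul, cos_zero, mul_one, if_true, pow_zero] at hmass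
      simp_rw [mul_sub, mul_one]
      rw [intervalIntegral.integral_sub (hV r hr')
        ((hV r hr').mul_continuousOn (by fun_prop)), hmass, hcoeff r hr' N, if_neg hN]
  have hlim := (hL1.tendsto_integral_mul (eventually_of_mem hr hV) hf hδ hK
    (w := fun θ => 1 - cos (N * θ)) (by fun_prop) (by simp)).congr' (eventually_of_mem hr hval)
  have hlim' : Tendsto (fun r : ℝ => 2 * π * c 0 - π * (c N * r ^ N)) (𝓝[<] 1)
      (𝓝 (2 * π * c 0 - π * c N)) := by
    simpa using ((by fun_prop : Continuous fun r : ℝ => 2 * π * c 0 - π * (c N * r ^ N)).tendsto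
      1).mono_left nhdsWithin_le_nhds
  linarith [tendsto_nhds_unique hlim hlim']

theorem tendsto_coeff_of_hasSum_mul_cos {c : ℕ → ℝ} {V : ℝ → ℝ → ℝ} {f : ℝ → ℝ} {δ C : ℝ}
    (hc : ∀ r ∈ Ico (0 : ℝ) 1, Summable fun n => |c n * r ^ n|)
    (hV : ∀ r ∈ Ico (0 : ℝ) 1, ∀ θ, HasSum (fun n => c n * r ^ n * cos (n * θ)) (V r θ))
    (hL1 : TendstoL1locAwayFromZero (𝓝[<] 1) V f) (hδ : δ ∈ Ioo 0 π)
    (hlow : ∀ θ ∈ Ioo (-δ) δ, ∀ r ∈ Ico (0 : ℝ) 1, -C ≤ V r θ) :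
    Tendsto c atTop (𝓝 ((2 * π * c 0 - ∫ θ in (-π)..π, f θ) / π)) := by
  have hr : Ico (0 : ℝ) 1 ∈ 𝓝[<] 1 := Ico_mem_nhdsLT one_pos
  have hVeq : ∀ r ∈ Ico (0 : ℝ) 1, V r = fun θ => ∑' n, c n * r ^ n * cos (n * θ) :=
    fun r hr' => funext fun θ => (hV r hr' θ).tsum_eq.symm
  have hcoeff : ∀ r ∈ Ico (0 : ℝ) 1, ∀ N : ℕ,
      ∫ θ in (-π)..π, V r θ * cos (N * θ) = (if N = 0 then 2 * π else π) * (c N * r ^ N) :=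
    fun r hr' N => by rw [hVeq r hr']; exact integral_tsum_mul_cos_mul_cos (hc r hr') N
  have hVint : ∀ r ∈ Ico (0 : ℝ) 1, IntervalIntegrable (V r) volume (-π) π := fun r hr' => by
    rw [hVeq r hr']
    exact (continuous_tsum_mul_cos (hc r hr')).intervalIntegrable _ _
  obtain ⟨K, hK⟩ := hL1.eventually_integral_abs_le (eventually_of_mem hr hVint) hδ
    (eventually_of_mem hr fun r hr' θ hθ => hlow θ hθ r hr')
    (eventually_of_mem hr fun r hr' => by simpa using (hcoeff r hr' 0).le)
  have hf := hL1.intervalIntegrable_of_eventually_integral_abs_le (eventually_of_mem hr hVint)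
    hδ hK
  have hRL := ((tendsto_integral_mul_cos_nat hf).const_add
    (2 * π * c 0 - ∫ θ in (-π)..π, f θ)).div_const π
  rw [add_zero] at hRL
  refine hRL.congr' ?_
  filter_upwards [eventually_ne_atTop 0] with N hN
  rw [div_eq_iff pi_ne_zero, mul_comm (c N) π, hL1.pi_mul_coeff_eq hVint hcoeff hf hδ hK hN]
  simp_rw [mul_sub, mul_one]
  rw [intervalIntegral.integral_sub hf (hf.mul_continuousOn (by fun_prop))]
  ring

theorem power_series_tauberian_b1_general (c : ℕ → ℝ) (F : ℂ → ℂ)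
    (hF : ∀ z : ℂ, ‖z‖ < 1 → HasSum (fun n : ℕ => (c n : ℂ) * z ^ n) (F z))
    (U : ℂ → ℝ) (hU : ∀ z : ℂ, U z = (F z).re)
    (hbd : L1locBoundaryBehaviorDisc U)
    (θ₀ : ℝ) (hθ₀ : θ₀ ∈ Ioo 0 Real.pi)
    (cst : ℝ)
    (hlow : ∀ θ ∈ Ioo (-θ₀) θ₀, ∀ r ∈ Ico (0 : ℝ) 1,
      -cst ≤ U (r * Complex.exp (θ * Complex.I))) :
    ∃ a : ℝ,
      Tendsto c atTop (nhds a) ∧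
      Tendsto (fun r : ℝ => (1 - r) * U r) (nhdsWithin 1 (Iio 1)) (nhds a) := by
  obtain ⟨f, hf⟩ := hbd
  have hseries : ∀ r ∈ Ico (0 : ℝ) 1, ∀ θ : ℝ, HasSum (fun n => c n * r ^ n * cos (n * θ))
      (U (r * Complex.exp (θ * Complex.I))) := fun r hr θ => by
    rw [hU]
    exact hasSum_mul_pow_mul_cos (hF _ (by simpa [abs_of_nonneg hr.1] using hr.2))
  have hsumm : ∀ r ∈ Ico (0 : ℝ) 1, Summable fun n => |c n * r ^ n| := fun r hr => by
    obtain ⟨ρ, hrρ, hρ1⟩ := exists_between hr.2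
    have hρ0 : 0 < ρ := hr.1.trans_lt hrρ
    simpa using summable_norm_mul_pow_of_summable (w := (r : ℂ))
      (hF ρ (by simpa [abs_of_pos hρ0] using hρ1)).summable
      (by simpa [abs_of_nonneg hr.1, abs_of_pos hρ0] using hrρ)
  have hc := tendsto_coeff_of_hasSum_mul_cos hsumm hseries hf hθ₀ hlow
  refine ⟨_, hc, (tendsto_one_sub_mul_tsum_mul_pow hc).congr' ?_⟩
  filter_upwards [Ico_mem_nhdsLT one_pos] with r hr
  simpa using congrArg ((1 - r) * ·) (hseries r hr 0).tsum_eq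

/-- Theorem 1.4: Tauberian theorem for power series with real coefficients. -/
theorem power_series_tauberian_b1 (c : ℕ → ℝ) (F : ℂ → ℂ)
    (hF : ∀ z : ℂ, ‖z‖ < 1 → HasSum (fun n : ℕ => (c n : ℂ) * z ^ n) (F z))
    (U : ℂ → ℝ) (hU : ∀ z : ℂ, U z = (F z).re)
    (hbd : L1locBoundaryBehaviorDisc U)
    (θ₀ : ℝ) (hθ₀ : θ₀ ∈ Ioo 0 Real.pi)
    (cst : ℝ) (hcst : 0 ≤ cst)
    (hlow : ∀ θ ∈ Ioo (-θ₀) θ₀, ∀ r ∈ Ico (0 : ℝ) 1,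
      -cst ≤ U (r * Complex.exp (θ * Complex.I))) :
    ∃ a : ℝ,
      Tendsto c atTop (nhds a) ∧
      Tendsto (fun r : ℝ => (1 - r) * U r) (nhdsWithin 1 (Iio 1)) (nhds a) :=
  power_series_tauberian_b1_general c F hF U hU hbd θ₀ hθ₀ cst hlow
end

section
/- (Kolmogorov–Erdős–Feller–Pollard renewal theorem.) Let (p_n)_{n≥1} be a sequence of non-negative reals with Σ_{n=1}^∞ p_n = 1 and gcd{n ≥ 1 : p_n ≠ 0} = 1. Define (q_n)_{n≥0} by q_0 = 1 and q_n = Σ_{k=1}^n p_k q_{n−k} for n ≥ 1. Then q_n → 1 / Σ_{n=1}^∞ n p_n as n → ∞, where the limit is interpreted as 0 when Σ_{n=1}^∞ n p_n = ∞. -/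
/-!
With the tails `r k = ∑_{n > k} p n`, the renewal equation becomes `∑_{k ≤ n} r k q (n - k) = 1`,
and `∑ r k = ∑ n p n`. All `q n` lie in `[0, 1]`. Let `q (n_j) → λ = limsup q`. Since `q n` is
an average of its own past with weights `p`, and eventually no value exceeds `λ` by much, also
`q (n_j - m) → λ` whenever `p m > 0`, hence for every `m` in the additive monoid generated by the
support of `p`. By the gcd condition this monoid contains every `m ≥ N`, and passing to the limit
in the identity along `n_j - N` gives `λ ∑ r k = 1`, or `λ = 0` when the mean is infinite.
The same argument applied to `1 - q`, which satisfies the renewal equation up to an error tending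
to `0`, identifies `liminf q`.
-/

open Filter Finset Topology

theorem sum_Icc_one_eq_sum_range {M : Type*} [AddCommMonoid M] {f : ℕ → M} (hf0 : f 0 = 0)
    (n : ℕ) : ∑ k ∈ Icc 1 n, f k = ∑ k ∈ range (n + 1), f k := by
  rw [range_eq_Ico, sum_eq_sum_Ico_succ_bot n.succ_pos, hf0, zero_add]
  rfl

theorem renewal_mem_Icc {p q : ℕ → ℝ} (hp : ∀ n, 0 ≤ p n) (hp1 : ∀ n, ∑ k ∈ Icc 1 n, p k ≤ 1)
    (hq0 : q 0 ∈ Set.Icc 0 1) (hq : ∀ n, 1 ≤ n → q n = ∑ k ∈ Icc 1 n, p k * q (n - k)) (n : ℕ) :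
    q n ∈ Set.Icc 0 1 := by
  induction n using Nat.strong_induction_on with
  | _ n ih =>
    rcases Nat.eq_zero_or_pos n with rfl | hn
    · exact hq0
    have hlt : ∀ k ∈ Icc 1 n, n - k < n := fun k hk => by grind
    rw [hq n hn]
    refine ⟨sum_nonneg fun k hk => mul_nonneg (hp k) (ih _ (hlt k hk)).1, ?_⟩
    calc ∑ k ∈ Icc 1 n, p k * q (n - k) ≤ ∑ k ∈ Icc 1 n, p k :=
          sum_le_sum fun k hk => mul_le_of_le_one_right (hp k) (ih _ (hlt k hk)).2
      _ ≤ 1 := hp1 n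

theorem sum_range_mul_eq_one_of_renewal {R : Type*} [CommRing R] {p q r : ℕ → R}
    (hp0 : p 0 = 0) (hq0 : q 0 = 1) (hq : ∀ n, 1 ≤ n → q n = ∑ k ∈ range (n + 1), p k * q (n - k))
    (hr0 : r 0 = 1) (hr : ∀ k, r k = p (k + 1) + r (k + 1)) (n : ℕ) :
    ∑ k ∈ range (n + 1), r k * q (n - k) = 1 := by
  induction n with
  | zero => simp [hr0, hq0]
  | succ n ih =>
    have hq' : q (n + 1) = ∑ k ∈ range (n + 1), p (k + 1) * q (n - k) := by
      rw [hq (n + 1) n.succ_pos, sum_range_succ', hp0]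
      simp
    have hr' : ∀ k, r (k + 1) = r k - p (k + 1) := fun k => by rw [hr k]; ring
    rw [sum_range_succ', hr0, one_mul, Nat.sub_zero, hq']
    simp only [hr', Nat.add_sub_add_right, sub_mul, sum_sub_distrib, ih]
    ring

noncomputable def tailSum (p : ℕ → ℝ) (k : ℕ) : ℝ := ∑' i, p (i + (k + 1))

section tailSum

variable {p : ℕ → ℝ}

theorem tailSum_nonneg (hp : ∀ n, 0 ≤ p n) (k : ℕ) : 0 ≤ tailSum p k :=
  tsum_nonneg fun _ => hp _

theorem tailSum_zero (hps : Summable p) : tailSum p 0 = ∑' n, p n - p 0 := by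
  rw [hps.tsum_eq_zero_add, add_sub_cancel_left, tailSum]

theorem tailSum_eq_add (hps : Summable p) (k : ℕ) :
    tailSum p k = p (k + 1) + tailSum p (k + 1) := by
  rw [tailSum, ((summable_nat_add_iff _).2 hps).tsum_eq_zero_add, tailSum]
  simp only [zero_add, add_assoc, add_comm 1]

theorem ofReal_tailSum (hp : ∀ n, 0 ≤ p n) (hps : Summable p) (k : ℕ) :
    ENNReal.ofReal (tailSum p k) = ∑' n, if k < n then ENNReal.ofReal (p n) else 0 := by
  rw [tailSum, ENNReal.ofReal_tsum_of_nonneg (fun _ => hp _) ((summable_nat_add_iff _).2 hps),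
    ← ENNReal.summable.sum_add_tsum_nat_add' (k := k + 1)
      (f := fun n => if k < n then ENNReal.ofReal (p n) else 0), sum_eq_zero, zero_add]
  · exact tsum_congr fun i => by rw [if_pos (by omega)]
  · exact fun i hi => if_neg (by simp at hi; omega)

theorem tsum_tailSum (hp : ∀ n, 0 ≤ p n) (hps : Summable p) :
    ∑' k, tailSum p k = ∑' n : ℕ, (n : ℝ) * p n := by
  have hreal : ∀ f : ℕ → ℝ, (∀ n, 0 ≤ f n) → ∑' n, f n = (∑' n, ENNReal.ofReal (f n)).toReal :=
    fun f hf => by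
      rw [ENNReal.tsum_toReal_eq fun _ => ENNReal.ofReal_ne_top]
      simp only [ENNReal.toReal_ofReal (hf _)]
  rw [hreal _ (tailSum_nonneg hp), hreal _ fun n => mul_nonneg n.cast_nonneg (hp n)]
  congr 1
  simp_rw [ofReal_tailSum hp hps]
  rw [ENNReal.tsum_comm]
  refine tsum_congr fun n => ?_
  rw [tsum_eq_sum (s := range n) (fun k hk => if_neg (by simpa using hk)),
    sum_congr rfl (fun k hk => if_pos (mem_range.1 hk)), sum_const, card_range, nsmul_eq_mul,
    ENNReal.ofReal_mul n.cast_nonneg, ENNReal.ofReal_natCast]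

end tailSum

section Spreading

variable {p Q : ℕ → ℝ}

theorem sum_range_mul_le_of_le_except {m M n : ℕ} {B : ℝ} (hp : ∀ n, 0 ≤ p n) (hps : Summable p)
    (hp1 : ∑' n, p n ≤ 1) (hQ1 : ∀ n, Q n ≤ 1) (hmM : m ≤ M) (hMn : M ≤ n) (hB0 : 0 ≤ B)
    (hB : ∀ k ≤ M, k ≠ m → Q (n - k) ≤ B) :
    ∑ k ∈ range (n + 1), p k * Q (n - k) ≤
      (1 - p m) * B + p m * Q (n - m) + ∑' k, p (k + (M + 1)) := by
  have hm : m ∈ range (M + 1) := mem_range.2 (by omega)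
  have hhead : ∑ k ∈ (range (M + 1)).erase m, p k * Q (n - k) ≤ (1 - p m) * B := by
    have hmass : ∑ k ∈ (range (M + 1)).erase m, p k ≤ 1 - p m := by
      rw [sum_erase_eq_sub hm]
      linarith [hps.sum_le_tsum (range (M + 1)) fun k _ => hp k]
    calc ∑ k ∈ (range (M + 1)).erase m, p k * Q (n - k)
        ≤ ∑ k ∈ (range (M + 1)).erase m, p k * B := sum_le_sum fun k hk => by
          obtain ⟨hkm, hk⟩ := mem_erase.1 hk
          exact mul_le_mul_of_nonneg_left (hB k (by simpa [Nat.lt_succ_iff] using hk) hkm) (hp k)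
      _ ≤ (1 - p m) * B := by rw [← sum_mul]; exact mul_le_mul_of_nonneg_right hmass hB0
  have htail : ∑ k ∈ Ico (M + 1) (n + 1), p k * Q (n - k) ≤ ∑' k, p (k + (M + 1)) :=
    calc ∑ k ∈ Ico (M + 1) (n + 1), p k * Q (n - k)
        ≤ ∑ k ∈ Ico (M + 1) (n + 1), p k :=
          sum_le_sum fun k _ => mul_le_of_le_one_right (hp k) (hQ1 _)
      _ = ∑ k ∈ range (n - M), p (k + (M + 1)) := by
          rw [sum_Ico_eq_sum_range]; simp only [add_comm (M + 1), Nat.add_sub_add_right]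
      _ ≤ ∑' k, p (k + (M + 1)) :=
          ((summable_nat_add_iff _).2 hps).sum_le_tsum _ fun k _ => hp _
  rw [← sum_range_add_sum_Ico _ (by omega : M + 1 ≤ n + 1), ← add_sum_erase _ _ hm]
  linarith

theorem tendsto_comp_sub_of_pos {e : ℕ → ℝ} {L : ℝ} {ψ : ℕ → ℕ} {m : ℕ} (hp : ∀ n, 0 ≤ p n)
    (hps : Summable p) (hp1 : ∑' n, p n ≤ 1) (hQ : ∀ n, Q n ∈ Set.Icc 0 1)
    (he : Tendsto e atTop (𝓝 0))
    (hrec : ∀ᶠ n in atTop, Q n ≤ ∑ k ∈ range (n + 1), p k * Q (n - k) + e n)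
    (hL : ∀ b > L, ∀ᶠ n in atTop, Q n < b) (hψ : Tendsto ψ atTop atTop)
    (hψL : Tendsto (Q ∘ ψ) atTop (𝓝 L)) (hm : 0 < p m) :
    Tendsto (fun j => Q (ψ j - m)) atTop (𝓝 L) := by
  have hψm : Tendsto (fun j => ψ j - m) atTop atTop := (tendsto_sub_atTop_nat m).comp hψ
  refine tendsto_order.2 ⟨fun a ha => ?_, fun b hb => hψm.eventually (hL b hb)⟩
  have hL0 : 0 ≤ L := ge_of_tendsto hψL (Eventually.of_forall fun j => (hQ _).1)
  -- four errors of size at most `δ` arise below; together they cost at most `p m * (L - a)`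
  set δ := p m * (L - a) / 4 with hδ
  have hδ0 : 0 < δ := by have := sub_pos.2 ha; positivity
  obtain ⟨M, hMtail, hmM⟩ : ∃ M, ∑' k, p (k + (M + 1)) < δ ∧ m ≤ M :=
    ((((tendsto_sum_nat_add p).comp (tendsto_add_atTop_nat 1)).eventually
      (gt_mem_nhds hδ0)).and (eventually_ge_atTop m)).exists
  obtain ⟨n₀, hn₀⟩ := (hL (L + δ) (by linarith)).exists_forall_of_atTop
  have hbound : ∀ᶠ n in atTop, Q n < (1 - p m) * (L + δ) + p m * Q (n - m) + 2 * δ := by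
    filter_upwards [hrec, he.eventually (gt_mem_nhds hδ0), eventually_ge_atTop (n₀ + M)]
      with n hn hen hnM
    have := sum_range_mul_le_of_le_except (B := L + δ) hp hps hp1 (fun n => (hQ n).2) hmM
      (by omega) (by linarith) fun k hk _ => (hn₀ (n - k) (by omega)).le
    linarith
  filter_upwards [hψL.eventually (lt_mem_nhds (by linarith : L - δ < L)), hψ.eventually hbound]
    with j hj hbj
  have hδ4 : 4 * δ = p m * L - p m * a := by rw [hδ]; ring
  have hexp : (1 - p m) * (L + δ) = L + δ - p m * L - p m * δ := by ring
  have : p m * a < p m * Q (ψ j - m) := by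
    simp only [Function.comp_apply] at hj
    linarith [mul_pos hm hδ0]
  exact lt_of_mul_lt_mul_left this hm.le

theorem tendsto_comp_sub_of_mem_closure {e : ℕ → ℝ} {L : ℝ} {ψ : ℕ → ℕ} {m : ℕ}
    (hp : ∀ n, 0 ≤ p n) (hps : Summable p) (hp1 : ∑' n, p n ≤ 1) (hQ : ∀ n, Q n ∈ Set.Icc 0 1)
    (he : Tendsto e atTop (𝓝 0))
    (hrec : ∀ᶠ n in atTop, Q n ≤ ∑ k ∈ range (n + 1), p k * Q (n - k) + e n)
    (hL : ∀ b > L, ∀ᶠ n in atTop, Q n < b) (hψ : Tendsto ψ atTop atTop)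
    (hψL : Tendsto (Q ∘ ψ) atTop (𝓝 L)) (hm : m ∈ AddSubmonoid.closure {n | p n ≠ 0}) :
    Tendsto (fun j => Q (ψ j - m)) atTop (𝓝 L) := by
  induction hm using AddSubmonoid.closure_induction generalizing ψ with
  | mem m hm =>
    exact tendsto_comp_sub_of_pos hp hps hp1 hQ he hrec hL hψ hψL ((hp m).lt_of_ne' hm)
  | zero => exact hψL
  | add a b _ _ iha ihb =>
    simpa only [Function.comp_apply, Nat.sub_sub] using
      ihb ((tendsto_sub_atTop_nat a).comp hψ) (iha hψ hψL)

end Spreading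

theorem eq_one_div_tsum_of_tendsto_comp_sub {r Q : ℕ → ℝ} {ψ : ℕ → ℕ} {c : ℝ}
    (hr : ∀ k, 0 ≤ r k) (hQ : ∀ n, Q n ∈ Set.Icc 0 1)
    (hid : ∀ n, ∑ k ∈ range (n + 1), r k * Q (n - k) = 1) (hψ : Tendsto ψ atTop atTop)
    (hc : ∀ k, Tendsto (fun j => Q (ψ j - k)) atTop (𝓝 c)) : c = 1 / ∑' k, r k := by
  have hlim : ∀ M, Tendsto (fun j => ∑ k ∈ range M, r k * Q (ψ j - k)) atTop
      (𝓝 ((∑ k ∈ range M, r k) * c)) := fun M => by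
    rw [sum_mul]; exact tendsto_finsetSum _ fun k _ => (hc k).const_mul (r k)
  have hsplit : ∀ M n, M ≤ n + 1 →
      ∑ k ∈ range M, r k * Q (n - k) + ∑ k ∈ Ico M (n + 1), r k * Q (n - k) = 1 :=
    fun M n h => (sum_range_add_sum_Ico _ h).trans (hid n)
  have hupper : ∀ M, (∑ k ∈ range M, r k) * c ≤ 1 := fun M =>
    le_of_tendsto (hlim M) <| (hψ.eventually_ge_atTop M).mono fun j hj => by
      linarith [hsplit M (ψ j) (by omega),
        sum_nonneg fun k (_ : k ∈ Ico M (ψ j + 1)) => mul_nonneg (hr k) (hQ (ψ j - k)).1]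
  by_cases hrs : Summable r
  · have hS := hrs.hasSum.tendsto_sum_nat
    have hlower : ∀ M, 1 ≤ (∑ k ∈ range M, r k) * c + (∑' k, r k - ∑ k ∈ range M, r k) :=
      fun M => ge_of_tendsto ((hlim M).add_const _) <| (hψ.eventually_ge_atTop M).mono
        fun j hj => by
          have hIco : ∑ k ∈ Ico M (ψ j + 1), r k * Q (ψ j - k) ≤ ∑ k ∈ Ico M (ψ j + 1), r k :=
            sum_le_sum fun k _ => mul_le_of_le_one_right (hr k) (hQ _).2
          have hmass := sum_range_add_sum_Ico r (by omega : M ≤ ψ j + 1)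
          linarith [hsplit M (ψ j) (by omega), hrs.sum_le_tsum (range (ψ j + 1)) fun k _ => hr k]
    have h1 : (∑' k, r k) * c ≤ 1 := le_of_tendsto (hS.mul_const c) (Eventually.of_forall hupper)
    have h2 : 1 ≤ (∑' k, r k) * c := by
      simpa using ge_of_tendsto ((hS.mul_const c).add (tendsto_const_nhds.sub hS))
        (Eventually.of_forall hlower)
    rw [mul_comm] at h1 h2
    exact eq_one_div_of_mul_eq_one_left (le_antisymm h1 h2)
  · rw [tsum_eq_zero_of_not_summable hrs, div_zero]
    refine le_antisymm (not_lt.1 fun hc0 => ?_)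
      (ge_of_tendsto (hc 0) (Eventually.of_forall fun j => (hQ _).1))
    obtain ⟨M, hM⟩ := (((not_summable_iff_tendsto_nat_atTop_of_nonneg hr).1 hrs).eventually_gt_atTop
      (1 / c)).exists
    rw [div_lt_iff₀ hc0] at hM
    linarith [hupper M]

theorem tendsto_of_limsup_eq_of_one_sub_limsup_one_sub_eq {ι : Type*} {l : Filter ι} {Q : ι → ℝ}
    {c : ℝ} (hle : IsBoundedUnder (· ≤ ·) l Q) (hge : IsBoundedUnder (· ≥ ·) l Q)
    (hsup : limsup Q l = c) (hinf : 1 - limsup (fun i => 1 - Q i) l = c) :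
    Tendsto Q l (𝓝 c) := by
  obtain ⟨b, hb⟩ := hge
  have hle' : IsBoundedUnder (· ≤ ·) l fun i => 1 - Q i :=
    ⟨1 - b, eventually_map.2 ((eventually_map.1 hb).mono fun i hi => by simp only; linarith)⟩
  refine tendsto_order.2 ⟨fun a ha => ?_, fun a ha => eventually_lt_of_limsup_lt (hsup ▸ ha) hle⟩
  filter_upwards [eventually_lt_of_limsup_lt (by linarith : _ < 1 - a) hle'] with i hi
  linarith

theorem exists_tendsto_comp_sub_limsup {p Q e : ℕ → ℝ} (hp : ∀ n, 0 ≤ p n) (hps : Summable p)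
    (hp1 : ∑' n, p n ≤ 1) (hQ : ∀ n, Q n ∈ Set.Icc 0 1) (he : Tendsto e atTop (𝓝 0))
    (hrec : ∀ᶠ n in atTop, Q n ≤ ∑ k ∈ range (n + 1), p k * Q (n - k) + e n) :
    ∃ ψ : ℕ → ℕ, Tendsto ψ atTop atTop ∧ ∀ m ∈ AddSubmonoid.closure {n | p n ≠ 0},
      Tendsto (fun j => Q (ψ j - m)) atTop (𝓝 (limsup Q atTop)) := by
  have hbdd : IsBoundedUnder (· ≤ ·) atTop Q := isBoundedUnder_of ⟨1, fun n => (hQ n).2⟩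
  have hbdd' : IsBoundedUnder (· ≥ ·) atTop Q := isBoundedUnder_of ⟨0, fun n => (hQ n).1⟩
  obtain ⟨ψ, hψQ, hψ⟩ := exists_seq_tendsto_limsup hbdd'.isCoboundedUnder_le hbdd
  exact ⟨ψ, hψ, fun m hm => tendsto_comp_sub_of_mem_closure hp hps hp1 hQ he hrec
    (fun b hb => eventually_lt_of_limsup_lt hb hbdd) hψ hψQ hm⟩

theorem eq_one_div_tsum_nat_mul_of_renewal {p q : ℕ → ℝ} {ψ : ℕ → ℕ} {c : ℝ} {N : ℕ}
    (hp : ∀ n, 0 ≤ p n) (hp0 : p 0 = 0) (hps : Summable p) (hsum : ∑' n, p n = 1)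
    (hq0 : q 0 = 1) (hq : ∀ n, 1 ≤ n → q n = ∑ k ∈ range (n + 1), p k * q (n - k))
    (hQ : ∀ n, q n ∈ Set.Icc 0 1) (hψ : Tendsto ψ atTop atTop)
    (hc : ∀ k, Tendsto (fun j => q (ψ j - (N + k))) atTop (𝓝 c)) :
    c = 1 / ∑' n : ℕ, (n : ℝ) * p n := by
  have hid := sum_range_mul_eq_one_of_renewal hp0 hq0 hq
    (by rw [tailSum_zero hps, hsum, hp0, sub_zero]) (tailSum_eq_add hps)
  rw [← tsum_tailSum hp hps]
  refine eq_one_div_tsum_of_tendsto_comp_sub (tailSum_nonneg hp) hQ hid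
    ((tendsto_sub_atTop_nat N).comp hψ) fun k => ?_
  simpa only [Function.comp_apply, Nat.sub_sub] using hc k

/-- The Kolmogorov–Erdős–Feller–Pollard renewal theorem: if `(pₙ)` is a
probability distribution on `{1, 2, ...}` whose support has gcd `1`, and the
renewal sequence `(qₙ)` is defined by `q₀ = 1`, `qₙ = Σ_{k=1}^n p_k q_{n-k}`,
then `qₙ → 1 / Σ n pₙ` (the limit being `0` when the mean `Σ n pₙ` is infinite,
in accordance with the junk value `1/0 = 0` and the fact that `∑'` of a
divergent nonnegative series is `0`). -/
theorem kolmogorov_erdos_feller_pollard (p : ℕ → ℝ)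
    (hp : ∀ n, 0 ≤ p n) (hp0 : p 0 = 0)
    (hsum : ∑' n : ℕ, p n = 1)
    (hgcd : ∀ d : ℕ, (∀ n : ℕ, p n ≠ 0 → d ∣ n) → d = 1)
    (q : ℕ → ℝ) (hq0 : q 0 = 1)
    (hq : ∀ n : ℕ, 1 ≤ n → q n = ∑ k ∈ Finset.Icc 1 n, p k * q (n - k)) :
    Tendsto q atTop (nhds (1 / ∑' n : ℕ, (n : ℝ) * p n)) := by
  have hps : Summable p := by_contra fun h => by simp [tsum_eq_zero_of_not_summable h] at hsum
  have hrange (n : ℕ) (hn : 1 ≤ n) : q n = ∑ k ∈ range (n + 1), p k * q (n - k) := by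
    rw [hq n hn, sum_Icc_one_eq_sum_range (by simp [hp0])]
  have hQ : ∀ n, q n ∈ Set.Icc 0 1 := renewal_mem_Icc hp
    (fun n => by
      rw [sum_Icc_one_eq_sum_range hp0, ← hsum]; exact hps.sum_le_tsum _ fun k _ => hp k)
    (by simp [hq0]) hq
  obtain ⟨N, hN⟩ := Nat.exists_mem_closure_of_ge {n | p n ≠ 0}
  rw [hgcd (Nat.setGcd {n | p n ≠ 0}) fun n hn => Nat.setGcd_dvd_of_mem hn] at hN
  have hlim {ψ : ℕ → ℕ} {c : ℝ} (hψ : Tendsto ψ atTop atTop)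
      (hc : ∀ m ∈ AddSubmonoid.closure {n | p n ≠ 0},
        Tendsto (fun j => q (ψ j - m)) atTop (𝓝 c)) :
      c = 1 / ∑' n : ℕ, (n : ℝ) * p n :=
    eq_one_div_tsum_nat_mul_of_renewal hp hp0 hps hsum hq0 hrange hQ hψ fun k =>
      hc (N + k) (hN (N + k) (Nat.le_add_right N k) (one_dvd _))
  obtain ⟨ψ, hψ, hψq⟩ := exists_tendsto_comp_sub_limsup hp hps hsum.le hQ tendsto_const_nhds
    ((eventually_ge_atTop 1).mono fun n hn => by simp [← hrange n hn])
  have he : Tendsto (fun n => 1 - ∑ k ∈ range (n + 1), p k) atTop (𝓝 0) := by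
    simpa [hsum] using (tendsto_const_nhds (x := (1 : ℝ))).sub
      ((hps.hasSum.tendsto_sum_nat).comp (tendsto_add_atTop_nat 1))
  obtain ⟨φ, hφ, hφq⟩ := exists_tendsto_comp_sub_limsup (Q := fun n => 1 - q n) hp hps hsum.le
    (fun n => ⟨by linarith [(hQ n).2], by linarith [(hQ n).1]⟩) he
    ((eventually_ge_atTop 1).mono fun n hn => by simp [hrange n hn, mul_sub, sum_sub_distrib])
  exact tendsto_of_limsup_eq_of_one_sub_limsup_one_sub_eq
    (isBoundedUnder_of ⟨1, fun n => (hQ n).2⟩) (isBoundedUnder_of ⟨0, fun n => (hQ n).1⟩)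
    (hlim hψ hψq) (hlim hφ fun m hm => by simpa using (hφq m hm).const_sub 1)
end

section
/- Let S ∈ L¹_loc[0,∞) satisfy ∫₁^∞ |S(x)|/(x^k e^x) dx < ∞ for some k ∈ ℕ, and set U(s) = Re ∫₀^∞ e^{−sx} S(x) dx for Re s > 1. Suppose there exist λ > 0 and g ∈ L¹(−λ,λ) such that U(σ+it) ≥ g(t) for a.e. t ∈ (−λ,λ) and all σ ∈ (1,2]. Then sup_{1<σ<2} ∫_{−λ/2}^{λ/2} |U(σ+it)| dt < ∞. -/
open MeasureTheory Filter Set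

/-- The Laplace transform `𝓛{S;s} = ∫₀^∞ e^{-sx} S(x) dx`. -/
noncomputable def laplaceT (S : ℝ → ℝ) (s : ℂ) : ℂ :=
  ∫ x in Ioi (0 : ℝ), Complex.exp (-s * x) * (S x : ℂ)

/-!
Pair `U(σ + it)` with a smooth bump `φ` that equals `1` on `(-λ/2, λ/2)` and is supported in
`(-λ, λ)`. By Fubini, `∫ φ(t) U(σ + it) dt` is the real part of
`∫₀^∞ e^{-σx} S(x) φ̂(x) dx`; as `φ̂` decays faster than any power of `x`, this is bounded
uniformly in `σ ≥ 1` by `∫₀¹ |S|` and the growth condition on `(1, ∞)`. The lower bound `U ≥ g`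
converts this one-sided bound into a bound on `|U|`: `φU ≥ -|g|` on `(-λ, λ)`, and
`|U| ≤ U + 2|g|` on `(-λ/2, λ/2)`.
-/

open Real Complex FourierTransform
open scoped ContDiff SchwartzMap

lemma pow_mul_exp_neg_mul_le {a x : ℝ} (ha : 0 < a) (hx : 0 ≤ x) (k : ℕ) :
    x ^ k * rexp (-(a * x)) ≤ (k.factorial : ℝ) / a ^ k := by
  have h := pow_div_factorial_le_exp (x := a * x) (mul_nonneg ha.le hx) k
  rw [div_le_iff₀ (by positivity), mul_pow] at h
  rw [le_div_iff₀ (by positivity)]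
  calc x ^ k * rexp (-(a * x)) * a ^ k = a ^ k * x ^ k * rexp (-(a * x)) := by ring
    _ ≤ rexp (a * x) * (k.factorial : ℝ) * rexp (-(a * x)) := by gcongr
    _ = k.factorial := by
      rw [mul_right_comm, ← Real.exp_add, add_neg_cancel, Real.exp_zero, one_mul]

lemma norm_cexp_neg_mul_ofReal (σ x : ℝ) (c : ℂ) :
    ‖cexp (-σ * x) * c‖ = rexp (-(σ * x)) * ‖c‖ := by
  rw [norm_mul, ← ofReal_neg, ← ofReal_mul, norm_exp_ofReal, neg_mul]

noncomputable def growthMajorant (S : ℝ → ℝ) (k : ℕ) (x : ℝ) : ℝ :=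
  if x ≤ 1 then |S x| else |S x| / (x ^ k * rexp x)

section Majorant

variable {S : ℝ → ℝ} {k : ℕ}

lemma integrableOn_growthMajorant (hS : LocallyIntegrableOn S (Ici 0))
    (hint : IntegrableOn (fun x : ℝ => |S x| / (x ^ k * rexp x)) (Ioi 1)) :
    IntegrableOn (growthMajorant S k) (Ioi 0) := by
  have hSIcc : IntegrableOn S (Icc 0 1) :=
    hS.integrableOn_compact_subset Icc_subset_Ici_self isCompact_Icc
  rw [← Ioc_union_Ioi_eq_Ioi zero_le_one]
  refine IntegrableOn.union ?_ ?_
  · refine IntegrableOn.congr_fun (hSIcc.mono_set Ioc_subset_Icc_self).abs (fun x hx => ?_)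
      measurableSet_Ioc
    simp [growthMajorant, hx.2]
  · refine hint.congr_fun (fun x hx => ?_) measurableSet_Ioi
    simp [growthMajorant, not_le.mpr (mem_Ioi.mp hx)]

lemma exp_neg_mul_abs_mul_le_growthMajorant {x v C : ℝ} (hx : 0 < x) (hv : 0 ≤ v)
    (hvC : v ≤ C) (hxv : x ^ k * v ≤ C) :
    rexp (-x) * |S x| * v ≤ C * growthMajorant S k x := by
  unfold growthMajorant
  split_ifs with hx1
  · have : rexp (-x) ≤ 1 := exp_le_one_iff.mpr (by linarith)
    calc rexp (-x) * |S x| * v ≤ 1 * |S x| * C := by gcongr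
      _ = C * |S x| := by ring
  · have hxk : 0 < x ^ k * rexp x := by positivity
    calc rexp (-x) * |S x| * v = |S x| / (x ^ k * rexp x) * (x ^ k * v) := by
          rw [Real.exp_neg]; field_simp
      _ ≤ |S x| / (x ^ k * rexp x) * C := by gcongr
      _ = C * (|S x| / (x ^ k * rexp x)) := mul_comm _ _

lemma exp_neg_mul_abs_le_growthMajorant {σ x : ℝ} (hσ : 1 < σ) (hx : 0 < x) :
    rexp (-(σ * x)) * |S x| ≤ max 1 ((k.factorial : ℝ) / (σ - 1) ^ k) * growthMajorant S k x := by
  have hsplit : rexp (-(σ * x)) = rexp (-x) * rexp (-((σ - 1) * x)) := by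
    rw [← Real.exp_add]; ring_nf
  rw [hsplit, mul_right_comm]
  apply exp_neg_mul_abs_mul_le_growthMajorant hx (exp_pos _).le
  · exact (exp_le_one_iff.mpr (by nlinarith)).trans (le_max_left _ _)
  · exact (pow_mul_exp_neg_mul_le (by linarith) hx.le k).trans (le_max_right _ _)


lemma norm_integral_laplace_mul_le (hS : LocallyIntegrableOn S (Ici 0))
    (hint : IntegrableOn (fun x : ℝ => |S x| / (x ^ k * rexp x)) (Ioi 1))
    {w : ℝ → ℂ} {C : ℝ} (hw : ∀ x, (1 + |x|) ^ k * ‖w x‖ ≤ C) {σ : ℝ} (hσ : 1 ≤ σ) :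
    ‖∫ x in Ioi (0 : ℝ), cexp (-σ * x) * S x * w x‖
      ≤ C * ∫ x in Ioi (0 : ℝ), growthMajorant S k x := by
  rw [← integral_const_mul]
  refine (norm_integral_le_integral_norm _).trans (integral_mono_of_nonneg
    (Eventually.of_forall fun x => norm_nonneg _)
    ((integrableOn_growthMajorant hS hint).const_mul C) ?_)
  filter_upwards [ae_restrict_mem measurableSet_Ioi] with x (hx : 0 < x)
  have hpow : 1 ≤ (1 + |x|) ^ k := one_le_pow₀ (by linarith [abs_nonneg x])
  have hxpow : x ^ k ≤ (1 + |x|) ^ k := by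
    gcongr; linarith [le_abs_self x]
  calc ‖cexp (-σ * x) * S x * w x‖ = rexp (-(σ * x)) * |S x| * ‖w x‖ := by
        rw [norm_mul, norm_cexp_neg_mul_ofReal, norm_real, Real.norm_eq_abs]
    _ ≤ rexp (-x) * |S x| * ‖w x‖ := by gcongr; nlinarith
    _ ≤ C * growthMajorant S k x := by
        refine exp_neg_mul_abs_mul_le_growthMajorant hx (norm_nonneg _) ?_ ?_
        · exact (le_mul_of_one_le_left (norm_nonneg _) hpow).trans (hw x)
        · exact (mul_le_mul_of_nonneg_right hxpow (norm_nonneg _)).trans (hw x)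

lemma integrableOn_laplace_integrand (hS : LocallyIntegrableOn S (Ici 0))
    (hint : IntegrableOn (fun x : ℝ => |S x| / (x ^ k * rexp x)) (Ioi 1)) {σ : ℝ} (hσ : 1 < σ) :
    IntegrableOn (fun x : ℝ => cexp (-σ * x) * S x) (Ioi 0) := by
  have hSm : AEStronglyMeasurable S (volume.restrict (Ioi 0)) :=
    hS.aestronglyMeasurable.mono_measure (Measure.restrict_mono Ioi_subset_Ici_self le_rfl)
  refine Integrable.mono' ((integrableOn_growthMajorant hS hint).const_mul
    (max 1 ((k.factorial : ℝ) / (σ - 1) ^ k))) (by fun_prop) ?_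
  filter_upwards [ae_restrict_mem measurableSet_Ioi] with x (hx : 0 < x)
  rw [norm_cexp_neg_mul_ofReal, norm_real, Real.norm_eq_abs]
  exact exp_neg_mul_abs_le_growthMajorant hσ hx

end Majorant

section Pairing

variable {φ : ℝ → ℂ} {S : ℝ → ℝ} {σ : ℝ}

lemma integrable_prod_mul_laplace_kernel (hφ : Integrable φ)
    (hS : IntegrableOn (fun x : ℝ => cexp (-σ * x) * S x) (Ioi 0)) :
    Integrable (fun p : ℝ × ℝ => φ p.1 * (cexp (-(σ + p.1 * I) * p.2) * S p.2))
      (volume.prod (volume.restrict (Ioi 0))) := by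
  have hG : Integrable
      (fun p : ℝ × ℝ => φ p.1 * cexp (-(p.1 * p.2) * I) * (cexp (-σ * p.2) * S p.2))
      (volume.prod (volume.restrict (Ioi 0))) := by
    refine Integrable.mono' (hφ.norm.mul_prod hS.norm) ?_ (Eventually.of_forall fun p => ?_)
    · refine AEStronglyMeasurable.mul (AEStronglyMeasurable.mul ?_ ?_)
        hS.aestronglyMeasurable.comp_snd
      · exact hφ.aestronglyMeasurable.comp_fst
      · exact (Complex.continuous_exp.comp (by fun_prop)).aestronglyMeasurable
    · rw [norm_mul, norm_mul, ← ofReal_mul, ← ofReal_neg, norm_exp_ofReal_mul_I, mul_one]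
  refine hG.congr (Eventually.of_forall fun p => ?_)
  dsimp only
  rw [mul_assoc, ← mul_assoc (cexp _), ← Complex.exp_add]
  ring_nf

lemma integrable_mul_laplaceT (hφ : Integrable φ)
    (hS : IntegrableOn (fun x : ℝ => cexp (-σ * x) * S x) (Ioi 0)) :
    Integrable (fun t : ℝ => φ t * laplaceT S (σ + t * I)) := by
  refine (integrable_prod_mul_laplace_kernel hφ hS).integral_prod_left.congr
    (Eventually.of_forall fun t => ?_)
  exact integral_const_mul (φ t) _

-- Mathlib's `𝓕` uses the kernel `e^{-2πitξ}`, whence the frequency `x / (2π)`.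
lemma integral_mul_laplaceT (hφ : Integrable φ)
    (hS : IntegrableOn (fun x : ℝ => cexp (-σ * x) * S x) (Ioi 0)) :
    ∫ t : ℝ, φ t * laplaceT S (σ + t * I)
      = ∫ x in Ioi (0 : ℝ), cexp (-σ * x) * S x * 𝓕 φ (x / (2 * π)) := by
  have hkernel : ∀ t x : ℝ, φ t * (cexp (-(σ + t * I) * x) * S x)
      = cexp (-σ * x) * S x * (cexp (↑(-2 * π * t * (x / (2 * π))) * I) • φ t) := by
    intro t x
    have hπ : (2 * π) ≠ 0 := by positivity
    rw [show -2 * π * t * (x / (2 * π)) = -(t * x) by field_simp, smul_eq_mul]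
    rw [show cexp (-(σ + t * I) * x) = cexp (-σ * x) * cexp (↑(-(t * x)) * I) by
      rw [← Complex.exp_add]; push_cast; ring_nf]
    ring
  calc ∫ t : ℝ, φ t * laplaceT S (σ + t * I)
      = ∫ t : ℝ, ∫ x in Ioi (0 : ℝ), φ t * (cexp (-(σ + t * I) * x) * S x) := by
        simp_rw [laplaceT, integral_const_mul]
    _ = ∫ x in Ioi (0 : ℝ), ∫ t : ℝ, φ t * (cexp (-(σ + t * I) * x) * S x) :=
        integral_integral_swap (integrable_prod_mul_laplace_kernel hφ hS)
    _ = ∫ x in Ioi (0 : ℝ), cexp (-σ * x) * S x * 𝓕 φ (x / (2 * π)) := by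
        simp_rw [hkernel, integral_const_mul, fourier_real_eq_integral_exp_smul]

end Pairing

lemma HasCompactSupport.exists_one_add_pow_mul_norm_fourier_div_le {f : ℝ → ℂ}
    (hcs : HasCompactSupport f) (hf : ContDiff ℝ ∞ f) (k : ℕ) {c : ℝ} (hc : c ≠ 0) :
    ∃ C, ∀ x : ℝ, (1 + |x|) ^ k * ‖𝓕 f (x / c)‖ ≤ C := by
  let w : 𝓢(ℝ, ℂ) := SchwartzMap.compCLMOfContinuousLinearEquiv ℝ
    (ContinuousLinearEquiv.unitsEquivAut ℝ (Units.mk0 c⁻¹ (inv_ne_zero hc)))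
    (𝓕 (hcs.toSchwartzMap hf))
  refine ⟨2 ^ k * (Finset.Iic (k, 0)).sup (fun m => SchwartzMap.seminorm ℝ m.1 m.2) w,
    fun x => ?_⟩
  have := SchwartzMap.one_add_le_sup_seminorm_apply (𝕜 := ℝ) (m := (k, 0)) le_rfl le_rfl w x
  rwa [norm_iteratedFDeriv_zero] at this

lemma lintegral_ofReal_abs_le_of_lowerBound {α : Type*} [MeasurableSpace α] {μ : Measure α}
    {u g φ : α → ℝ} {I J : Set α} (hI : MeasurableSet I) (hIJ : I ⊆ J)
    (hφ0 : ∀ t, 0 ≤ φ t) (hφ1 : ∀ t, φ t ≤ 1) (hφI : ∀ t ∈ I, φ t = 1) (hφJ : ∀ t ∉ J, φ t = 0)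
    (hφu : Integrable (fun t => φ t * u t) μ) (hg : IntegrableOn g J μ)
    (hlow : ∀ᵐ t ∂μ.restrict J, g t ≤ u t) :
    ∫⁻ t in I, ENNReal.ofReal |u t| ∂μ
      ≤ ENNReal.ofReal (∫ t, φ t * u t ∂μ + 2 * ∫ t in J, |g t| ∂μ) := by
  have hv : IntegrableOn (fun t => φ t * u t + |g t|) J μ := hφu.integrableOn.add hg.abs
  have hv_nonneg : ∀ᵐ t ∂μ.restrict J, 0 ≤ φ t * u t + |g t| := by
    filter_upwards [hlow] with t ht
    have : φ t * g t ≤ φ t * u t := mul_le_mul_of_nonneg_left ht (hφ0 t)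
    nlinarith [neg_abs_le (g t), abs_nonneg (g t), hφ0 t, hφ1 t]
  have hu_le : ∀ᵐ t ∂μ.restrict I, |u t| ≤ φ t * u t + |g t| + |g t| := by
    filter_upwards [ae_restrict_of_ae_restrict_of_subset hIJ hlow, ae_restrict_mem hI]
      with t ht htI
    rw [hφI t htI, one_mul]
    rcases abs_cases (u t) with ⟨h, _⟩ | ⟨h, _⟩ <;> linarith [neg_abs_le (g t), abs_nonneg (g t)]
  have huI : IntegrableOn u I μ :=
    hφu.integrableOn.congr_fun (fun t ht => by simp [hφI t ht]) hI
  calc ∫⁻ t in I, ENNReal.ofReal |u t| ∂μ = ENNReal.ofReal (∫ t in I, |u t| ∂μ) :=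
        (ofReal_integral_eq_lintegral_ofReal huI.abs
          (Eventually.of_forall fun t => abs_nonneg _)).symm
    _ ≤ ENNReal.ofReal (∫ t in I, (φ t * u t + |g t| + |g t|) ∂μ) :=
        ENNReal.ofReal_le_ofReal (integral_mono_ae huI.abs
          ((hv.add hg.abs).mono_set hIJ) hu_le)
    _ ≤ ENNReal.ofReal (∫ t in J, (φ t * u t + |g t| + |g t|) ∂μ) := by
        refine ENNReal.ofReal_le_ofReal (setIntegral_mono_set (hv.add hg.abs) ?_
          hIJ.eventuallyLE)
        filter_upwards [hv_nonneg] with t ht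
        exact add_nonneg ht (abs_nonneg _)
    _ = ENNReal.ofReal (∫ t, φ t * u t ∂μ + 2 * ∫ t in J, |g t| ∂μ) := by
        rw [integral_add hv hg.abs, integral_add hφu.integrableOn hg.abs,
          setIntegral_eq_integral_of_forall_compl_eq_zero fun t ht => by simp [hφJ t ht]]
        ring_nf

/-- Remark 6.1 (first part): under the integral growth condition
`∫₁^∞ |S(x)|/(x^k eˣ) dx < ∞` and the `L¹` lower bound on `U = Re 𝓛{S;·}`,
the `L¹` means of `U` over `(-λ/2, λ/2)` are uniformly bounded for `1 < σ < 2`. -/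
theorem remark_B2_covers_Koga (S : ℝ → ℝ)
    (hS : LocallyIntegrableOn S (Ici 0))
    (k : ℕ)
    (hint : IntegrableOn (fun x : ℝ => |S x| / (x ^ k * Real.exp x)) (Ioi 1))
    (U : ℂ → ℝ) (hU : ∀ s : ℂ, U s = (laplaceT S s).re)
    (lam : ℝ) (hlam : 0 < lam)
    (g : ℝ → ℝ) (hg : IntegrableOn g (Ioo (-lam) lam))
    (hlow : ∀ σ ∈ Ioc (1 : ℝ) 2, ∀ᵐ t ∂(volume.restrict (Ioo (-lam) lam)),
      g t ≤ U (σ + t * Complex.I)) :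
    ∃ M : ℝ, ∀ σ ∈ Ioo (1 : ℝ) 2,
      (∫⁻ t in Ioo (-(lam / 2)) (lam / 2), ENNReal.ofReal |U (σ + t * Complex.I)|)
        ≤ ENNReal.ofReal M := by
  let φ : ContDiffBump (0 : ℝ) := ⟨lam / 2, lam, half_pos hlam, half_lt_self hlam⟩
  have hφC : HasCompactSupport (fun t => (φ t : ℂ)) :=
    φ.hasCompactSupport.comp_left ofReal_zero
  have hφint : Integrable (fun t => (φ t : ℂ)) :=
    (continuous_ofReal.comp φ.continuous).integrable_of_hasCompactSupport hφC
  obtain ⟨C, hC⟩ := hφC.exists_one_add_pow_mul_norm_fourier_div_le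
    (ofRealCLM.contDiff.comp φ.contDiff) k (by positivity : 2 * π ≠ 0)
  refine ⟨(C * ∫ x in Ioi (0 : ℝ), growthMajorant S k x) + 2 * ∫ t in Ioo (-lam) lam, |g t|,
    fun σ hσ => ?_⟩
  have hconv := integrableOn_laplace_integrand hS hint hσ.1
  have hre : ∀ t : ℝ, φ t * U (σ + t * I) = ((φ t : ℂ) * laplaceT S (σ + t * I)).re := by
    intro t; rw [hU, re_ofReal_mul]
  have hφU : Integrable (fun t : ℝ => φ t * U (σ + t * I)) :=
    (integrable_mul_laplaceT hφint hconv).re.congr (.of_forall fun t => (hre t).symm)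
  have hpaired_le : ∫ t, φ t * U (σ + t * I) ≤ C * ∫ x in Ioi (0 : ℝ), growthMajorant S k x := by
    calc ∫ t, φ t * U (σ + t * I) = (∫ t : ℝ, (φ t : ℂ) * laplaceT S (σ + t * I)).re := by
          simp_rw [hre]; exact integral_re (integrable_mul_laplaceT hφint hconv)
      _ ≤ _ := by
        rw [integral_mul_laplaceT hφint hconv]
        exact (re_le_norm _).trans (norm_integral_laplace_mul_le hS hint hC hσ.1.le)
  refine (lintegral_ofReal_abs_le_of_lowerBound measurableSet_Ioo ?_ (fun t => φ.nonneg)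
    (fun t => φ.le_one) (fun t ht => ?_) (fun t ht => ?_) hφU hg
    (hlow σ ⟨hσ.1, hσ.2.le⟩)).trans (ENNReal.ofReal_le_ofReal (add_le_add_left hpaired_le _))
  · exact Ioo_subset_Ioo (by linarith) (by linarith)
  · refine φ.one_of_mem_closedBall ?_
    rw [Real.closedBall_eq_Icc]
    exact ⟨by simp [φ]; linarith [ht.1], by simp [φ]; linarith [ht.2]⟩
  · refine Function.notMem_support.mp fun hsupp => ht ?_
    rwa [φ.support_eq, Real.ball_eq_Ioo, zero_sub, zero_add] at hsupp
end
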